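/- Let m ≥ 2, let Λ̃, Λ be real constants and μ a complex constant, and let λ₀(φ) = Σ_{k=−m−1}^{m+1} λ₀^{(2k)} e^{2ikφ} be the finite trigonometric sum with coefficients as in the almost-half-Einstein solution (λ₀^{(2m+2)} = (m!(m+1)!/(2(2m+2)!))·((2m+1)Λ − (2m+2)Λ̃) + μ, λ₀^{(2k)} = (2(2m+1)!/((m+1−k)!(m+1+k)!))·(k·λ₀^{(2m+2)} + (m+1−k)·Re(μ)) for 1 ≤ |k| ≤ m, λ₀^{(0)} = Λ/(2m+2) + (2(2m+1)!/(m!(m+1)!))·Re(μ), λ₀^{(−2k)} = conj(λ₀^{(2k)})). If λ₀ additionally satisfies tan(φ)·λ₀' − (2(m+1) − (2m+1)·sec²(φ))·λ₀ − Λ̃·sec²(φ) + Λ = 0 for all φ with cos φ ≠ 0, then Re(μ) = 0. -/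

import Mathlib

/-!
Multiplied by `cos² φ`, the first-order ODE says, in the variable `z = e^{2iφ}`, that a Laurent
polynomial in `z` (`einsteinLaurent`) vanishes at every point `z ≠ -1` of the unit circle, in
particular at all `(2m+5)`-th roots of unity, since that order is odd. Averaging its values there
against `z^{-(m+1)}` isolates its `z^{m+1}`-coefficient `-λ₀^{(2m)}/2 + m λ₀^{(2m+2)}`, which by the
explicit formula `λ₀^{(2m)} = 2 (m λ₀^{(2m+2)} + Re μ)` equals `-Re μ`.
-/

/-- The top Fourier coefficient `λ₀^{(2m+2)}`. -/
noncomputable def topCoeff (m : ℕ) (Λt Λ : ℝ) (μ : ℂ) : ℂ :=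
  ((m.factorial * (m + 1).factorial : ℕ) : ℂ) /
      (2 * ((2 * m + 2).factorial : ℕ)) *
    ((2 * m + 1) * (Λ : ℂ) - (2 * m + 2) * (Λt : ℂ)) + μ

/-- The Fourier coefficients `λ₀^{(2k)}`, for `k = -(m+1), …, m+1`. -/
noncomputable def lamCoeff (m : ℕ) (Λt Λ : ℝ) (μ : ℂ) (k : ℤ) : ℂ :=
  if k = (m : ℤ) + 1 then topCoeff m Λt Λ μ
  else if k = -((m : ℤ) + 1) then (starRingEnd ℂ) (topCoeff m Λt Λ μ)
  else if k = 0 then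
    ((Λ : ℂ) / (2 * m + 2)) +
      (2 * (((2 * m + 1).factorial : ℕ) : ℂ) /
        ((m.factorial * (m + 1).factorial : ℕ) : ℂ)) * (μ.re : ℂ)
  else
    (2 * (((2 * m + 1).factorial : ℕ) : ℂ)) /
        (((((m : ℤ) + 1 - k).toNat.factorial : ℕ) : ℂ) *
          ((((m : ℤ) + 1 + k).toNat.factorial : ℕ) : ℂ)) *
      ((k : ℂ) * topCoeff m Λt Λ μ + (((m : ℤ) + 1 - k : ℤ) : ℂ) * (μ.re : ℂ))

open Finset Complex

namespace IsPrimitiveRoot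

variable {K : Type*} [Field K] {ζ : K} {N : ℕ}

theorem sum_range_pow_zpow_eq_zero (hζ : IsPrimitiveRoot ζ N) {a : ℤ} (ha : ¬ (N : ℤ) ∣ a) :
    ∑ t ∈ range N, (ζ ^ t) ^ a = 0 := by
  have hζa : ζ ^ a ≠ 1 := mt (hζ.zpow_eq_one_iff_dvd a).1 ha
  have hpow : (ζ ^ a) ^ N = 1 := by
    rw [← zpow_natCast, ← zpow_mul, mul_comm, zpow_mul, hζ.zpow_eq_one, one_zpow]
  simp_rw [← zpow_natCast, ← zpow_mul, mul_comm _ a, zpow_mul, zpow_natCast]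
  rw [geom_sum_eq hζa, hpow, sub_self, zero_div]

theorem sum_range_mul_zpow_mul_zpow_neg [CharZero K] (hζ : IsPrimitiveRoot ζ N) (a : K)
    {i j : ℤ} (hij : |i - j| < N) :
    ∑ t ∈ range N, a * (ζ ^ t) ^ i * (ζ ^ t) ^ (-j) = if i = j then N * a else 0 := by
  have hζ0 : ζ ≠ 0 := hζ.ne_zero (by rintro rfl; simp at hij; linarith [abs_nonneg (i - j)])
  simp_rw [mul_assoc, ← mul_sum, ← zpow_add₀ (pow_ne_zero _ hζ0), ← sub_eq_add_neg]
  split_ifs with h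
  · simp [h, mul_comm]
  · refine mul_eq_zero_of_right _ (hζ.sum_range_pow_zpow_eq_zero fun hdvd => h ?_)
    have := Int.eq_zero_of_abs_lt_dvd hdvd hij
    omega

theorem sum_range_sum_mul_zpow_add_mul_zpow_neg [CharZero K] (hζ : IsPrimitiveRoot ζ N)
    (s : Finset ℤ) (g : ℤ → K) (e j : ℤ) (hs : ∀ k ∈ s, |k + e - j| < N) :
    ∑ t ∈ range N, (∑ k ∈ s, g k * (ζ ^ t) ^ (k + e)) * (ζ ^ t) ^ (-j) =
      if j - e ∈ s then N * g (j - e) else 0 := by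
  simp_rw [sum_mul]
  rw [sum_comm, sum_congr rfl fun k hk => hζ.sum_range_mul_zpow_mul_zpow_neg (g k) (hs k hk)]
  simp_rw [← eq_sub_iff_add_eq]
  exact sum_ite_eq' s (j - e) _

end IsPrimitiveRoot

theorem Real.cos_pi_mul_div_ne_zero_of_odd {N : ℕ} (hN : Odd N) (t : ℕ) :
    Real.cos (Real.pi * t / N) ≠ 0 := by
  obtain ⟨r, rfl⟩ := hN
  rw [Ne, Real.cos_eq_zero_iff]
  rintro ⟨n, hn⟩
  have : ((2 * t : ℤ) : ℝ) = ((2 * n + 1) * (2 * r + 1) : ℤ) := by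
    field_simp at hn
    push_cast at hn ⊢
    nlinarith [Real.pi_pos]
  have hodd : Odd ((2 * n + 1) * (2 * (r : ℤ) + 1)) :=
    (odd_two_mul_add_one n).mul (odd_two_mul_add_one _)
  rw [← Int.cast_injective this] at hodd
  exact Int.not_odd_iff_even.2 (even_two_mul _) hodd

theorem Complex.exp_two_mul_ofReal_pi_mul_div_mul_I (N t : ℕ) :
    exp (2 * ((Real.pi * t / N : ℝ) : ℂ) * I) = exp (2 * Real.pi * I / N) ^ t := by
  rw [← Complex.exp_nat_mul]
  push_cast
  ring_nf

theorem hasDerivAt_sum_exp (S : Finset ℤ) (c : ℤ → ℂ) (φ : ℝ) :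
    HasDerivAt (fun ψ : ℝ => ∑ k ∈ S, c k * exp (2 * k * I * ψ))
      (∑ k ∈ S, c k * (2 * k * I * exp (2 * k * I * φ))) φ := by
  refine HasDerivAt.fun_sum fun k _ => HasDerivAt.const_mul _ ?_
  simpa [mul_comm] using ((hasDerivAt_id (φ : ℂ)).const_mul (2 * (k : ℂ) * I)).cexp.comp_ofReal

noncomputable def einsteinLaurent (m : ℕ) (Λt Λ : ℝ) (S : Finset ℤ) (c : ℤ → ℂ) (z : ℂ) : ℂ :=
  ∑ k ∈ S, c k * ((k - (m + 1)) / 2) * z ^ (k + 1) + ∑ k ∈ S, c k * m * z ^ k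
    + ∑ k ∈ S, c k * ((-k - (m + 1)) / 2) * z ^ (k - 1)
    + Λ / 4 * z ^ (1 : ℤ) + Λ / 4 * z ^ (-1 : ℤ) + (Λ / 2 - Λt) * z ^ (0 : ℤ)

theorem einsteinODE_mul_cos_sq (m : ℕ) (Λt Λ : ℝ) (S : Finset ℤ) (c : ℤ → ℂ) {φ : ℝ}
    (hφ : Real.cos φ ≠ 0) :
    ((Real.tan φ : ℂ) * ∑ k ∈ S, c k * (2 * k * I * exp (2 * k * I * φ))
        - (2 * ((m : ℂ) + 1) - (2 * (m : ℂ) + 1) / (Real.cos φ : ℂ) ^ 2)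
          * ∑ k ∈ S, c k * exp (2 * k * I * φ)
        - (Λt : ℂ) / (Real.cos φ : ℂ) ^ 2 + Λ) * (Real.cos φ : ℂ) ^ 2
      = einsteinLaurent m Λt Λ S c (exp (2 * φ * I)) := by
  set z := exp (2 * φ * I) with hz_def
  have hz : z ≠ 0 := exp_ne_zero _
  have hcos : (Real.cos φ : ℂ) ≠ 0 := ofReal_ne_zero.2 hφ
  have hzinv : z⁻¹ = exp (-(2 * φ) * I) := by rw [← exp_neg]; ring_nf
  have hcos_sq : (Real.cos φ : ℂ) ^ 2 = (z + z⁻¹ + 2) / 4 := by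
    rw [hzinv, hz_def, exp_mul_I, exp_mul_I, cos_neg, sin_neg, ofReal_cos, cos_sq]
    ring
  have hsin_cos : (Real.sin φ : ℂ) * Real.cos φ = (z - z⁻¹) / (4 * I) := by
    rw [hzinv, hz_def, exp_mul_I, exp_mul_I, cos_neg, sin_neg, ofReal_cos, ofReal_sin,
      sin_two_mul]
    field_simp; ring
  have hexp : ∀ k : ℤ, exp (2 * k * I * φ) = z ^ k := fun k => by
    rw [hz_def, ← exp_int_mul]; ring_nf
  have hsums : (z - z⁻¹) / (4 * I) * ∑ k ∈ S, c k * (2 * k * I * z ^ k)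
      - (2 * (m + 1) * ((z + z⁻¹ + 2) / 4) - (2 * m + 1)) * ∑ k ∈ S, c k * z ^ k
      = ∑ k ∈ S, c k * ((k - (m + 1)) / 2) * z ^ (k + 1) + ∑ k ∈ S, c k * m * z ^ k
        + ∑ k ∈ S, c k * ((-k - (m + 1)) / 2) * z ^ (k - 1) := by
    rw [mul_sum, mul_sum, ← sum_sub_distrib, ← sum_add_distrib, ← sum_add_distrib]
    refine sum_congr rfl fun k _ => ?_
    rw [zpow_add_one₀ hz, zpow_sub_one₀ hz]
    field_simp
    ring
  rw [← hsin_cos, ← hcos_sq] at hsums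
  simp only [hexp, Real.tan_eq_sin_div_cos, einsteinLaurent, zpow_one, zpow_neg_one, zpow_zero,
    ofReal_div]
  rw [← hsums]
  generalize ∑ k ∈ S, c k * (2 * k * I * z ^ k) = A
  generalize ∑ k ∈ S, c k * z ^ k = B
  calc _ = Real.sin φ * Real.cos φ * A - (2 * (m + 1) * (Real.cos φ : ℂ) ^ 2 - (2 * m + 1)) * B
        - Λt + Λ * (Real.cos φ : ℂ) ^ 2 := by field_simp
    _ = _ := by rw [hcos_sq]; ring

theorem eq_two_mul_mul_of_einsteinLaurent_pow_eq_zero {m N : ℕ} (hm : m ≠ 0) (hN : 2 * m + 4 ≤ N)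
    {Λt Λ : ℝ} {c : ℤ → ℂ} {ζ : ℂ} (hζ : IsPrimitiveRoot ζ N)
    (h : ∀ t, einsteinLaurent m Λt Λ (Icc (-(m + 1 : ℤ)) (m + 1)) c (ζ ^ t) = 0) :
    c m = 2 * m * c (m + 1) := by
  set S := Icc (-(m + 1 : ℤ)) (m + 1)
  have hsum : ∑ t ∈ range N, einsteinLaurent m Λt Λ S c (ζ ^ t) * (ζ ^ t) ^ (-(m + 1 : ℤ)) = 0 :=
    sum_eq_zero fun t _ => by rw [h t, zero_mul]
  simp only [einsteinLaurent, add_mul, sum_add_distrib] at hsum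
  have hS (e : ℤ) (he : |e| ≤ 1) : ∀ k ∈ S, |k + e - (m + 1)| < N := by
    intro k hk
    rw [mem_Icc] at hk
    rw [abs_le] at he
    rw [abs_lt]
    omega
  have h1 := hζ.sum_range_sum_mul_zpow_add_mul_zpow_neg S (fun k => c k * ((k - (m + 1)) / 2))
    1 (m + 1) (hS 1 (by simp))
  have h2 := hζ.sum_range_sum_mul_zpow_add_mul_zpow_neg S (fun k => c k * m) 0 (m + 1)
    (hS 0 (by simp))
  have h3 := hζ.sum_range_sum_mul_zpow_add_mul_zpow_neg S (fun k => c k * ((-k - (m + 1)) / 2))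
    (-1) (m + 1) (hS (-1) (by simp))
  simp only [add_zero, sub_zero, ← sub_eq_add_neg] at h2 h3
  rw [h1, h2, h3, hζ.sum_range_mul_zpow_mul_zpow_neg _ (by rw [abs_lt]; omega),
    hζ.sum_range_mul_zpow_mul_zpow_neg _ (by rw [abs_lt]; omega),
    hζ.sum_range_mul_zpow_mul_zpow_neg _ (by rw [abs_lt]; omega),
    if_pos (by rw [mem_Icc]; omega), if_pos (by rw [mem_Icc]; omega),
    if_neg (by rw [mem_Icc]; omega), if_neg (by omega), if_neg (by omega), if_neg (by omega),
    add_sub_cancel_right] at hsum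
  apply mul_left_cancel₀ (Nat.cast_ne_zero.2 (by omega) : (N : ℂ) ≠ 0)
  push_cast at hsum
  linear_combination (-2 : ℂ) * hsum

theorem lamCoeff_natCast_add_one (m : ℕ) (Λt Λ : ℝ) (μ : ℂ) :
    lamCoeff m Λt Λ μ (m + 1) = topCoeff m Λt Λ μ := by
  simp [lamCoeff]

theorem lamCoeff_natCast {m : ℕ} (hm : m ≠ 0) (Λt Λ : ℝ) (μ : ℂ) :
    lamCoeff m Λt Λ μ m = 2 * (m * topCoeff m Λt Λ μ + μ.re) := by
  rw [lamCoeff, if_neg (by omega), if_neg (by omega), if_neg (by exact_mod_cast hm),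
    show ((m : ℤ) + 1 + m).toNat = 2 * m + 1 by omega, add_sub_cancel_left]
  have : ((2 * m + 1).factorial : ℂ) ≠ 0 := Nat.cast_ne_zero.2 (Nat.factorial_ne_zero _)
  simp only [Int.toNat_one, Nat.factorial_one, Nat.cast_one, one_mul, Int.cast_one]
  field_simp
  push_cast
  ring

/-- If the almost-half-Einstein solution `λ₀` additionally solves the
first-order (Einstein) ODE, then `Re μ = 0`. -/
theorem stmt_12 (m : ℕ) (hm : 2 ≤ m) (Λt Λ : ℝ) (μ : ℂ)
    (lam0 : ℝ → ℂ)
    (hlam0 : ∀ φ : ℝ, lam0 φ =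
      ∑ k ∈ Finset.Icc (-((m : ℤ) + 1)) ((m : ℤ) + 1),
        lamCoeff m Λt Λ μ k * Complex.exp (2 * (k : ℂ) * Complex.I * φ))
    (hode : ∀ φ : ℝ, Real.cos φ ≠ 0 →
      (Real.tan φ : ℂ) * deriv lam0 φ
        - (2 * ((m : ℂ) + 1)
            - (2 * (m : ℂ) + 1) / ((Real.cos φ : ℂ)) ^ 2) * lam0 φ
        - (Λt : ℂ) / ((Real.cos φ : ℂ)) ^ 2 + (Λ : ℂ) = 0) :
    μ.re = 0 := by
  set S := Icc (-((m : ℤ) + 1)) ((m : ℤ) + 1)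
  set N := 2 * m + 5
  have hderiv (φ : ℝ) :
      deriv lam0 φ = ∑ k ∈ S, lamCoeff m Λt Λ μ k * (2 * k * I * exp (2 * k * I * φ)) := by
    rw [funext hlam0]
    exact (hasDerivAt_sum_exp S _ φ).deriv
  have hroots (t : ℕ) :
      einsteinLaurent m Λt Λ S (lamCoeff m Λt Λ μ) (exp (2 * Real.pi * I / N) ^ t) = 0 := by
    have hcos := Real.cos_pi_mul_div_ne_zero_of_odd (N := N) ⟨m + 2, by ring⟩ t
    rw [← exp_two_mul_ofReal_pi_mul_div_mul_I, ← einsteinODE_mul_cos_sq m Λt Λ S _ hcos,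
      ← hderiv, ← hlam0, hode _ hcos, zero_mul]
  have hrel := eq_two_mul_mul_of_einsteinLaurent_pow_eq_zero (by omega) (by omega)
    (isPrimitiveRoot_exp N (by omega)) hroots
  rw [lamCoeff_natCast (by omega), lamCoeff_natCast_add_one] at hrel
  exact_mod_cast (by linear_combination hrel / 2 : (μ.re : ℂ) = 0)
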